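/- arXiv:1712.07582 — 2 statements merged into one kernel-verified Lean document; each statement's English description precedes it below -/
import Mathlib

section
/- Let a > 1 and f(x) = exp(1/(2(x−a)²)). Then the function y(x) = (a−x)^{−3} f(x) satisfies the Volterra integral equation (x−a)³ y(x) + ∫_{−1}^{x} y(s) ds = −f(−1) for all x ∈ [−1, 1]. -/
open Real

lemma stmt13_deriv (a s : ℝ) (hs : s ≠ a) :
    HasDerivAt (fun x => Real.exp (1 / (2 * (x - a) ^ 2)))
      ((a - s) ^ (-3 : ℤ) * Real.exp (1 / (2 * (s - a) ^ 2))) s := by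
  have hsa : s - a ≠ 0 := sub_ne_zero.mpr hs
  have h0 : (2 * (s - a) ^ 2) ≠ 0 := by positivity
  have h1 : HasDerivAt (fun x : ℝ => 2 * (x - a) ^ 2) (2 * (2 * (s - a))) s := by
    have := ((hasDerivAt_id s).sub_const a).pow 2
    simpa [mul_comm, mul_assoc, mul_left_comm] using this.const_mul 2
  have h2 : HasDerivAt (fun x : ℝ => 1 / (2 * (x - a) ^ 2))
      (-(2 * (2 * (s - a))) / (2 * (s - a) ^ 2) ^ 2) s := by
    exact (h1.inv h0).congr_of_eventuallyEq (Filter.Eventually.of_forall fun x => by simp [one_div])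
  have h3 := h2.exp
  convert h3 using 1
  have key : (a - s) ^ (-3 : ℤ) = -((s - a) ^ 3)⁻¹ := by
    rw [zpow_neg, show ((a - s) ^ (3:ℤ)) = (a - s) ^ (3:ℕ) from zpow_natCast _ 3,
      show (a - s) ^ (3:ℕ) = -(s - a) ^ (3:ℕ) by ring, inv_neg]
  have h4 : -(2 * (2 * (s - a))) / (2 * (s - a) ^ 2) ^ 2 = -((s - a) ^ 3)⁻¹ := by
    field_simp
  rw [key, h4]
  ring

/-- for `a > 1` and `f(x) = exp(1/(2(x-a)²))`, the function
`y(x) = (a-x)⁻³ f(x)` satisfies the Volterra integral equation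
`(x-a)³ y(x) + ∫_{-1}^x y(s) ds = -f(-1)` on `[-1,1]`. -/
theorem stmt13 (a : ℝ) (ha : 1 < a)
    (f : ℝ → ℝ) (hf : f = fun x => Real.exp (1 / (2 * (x - a) ^ 2)))
    (y : ℝ → ℝ) (hy : y = fun x => (a - x) ^ (-3 : ℤ) * f x) :
    ∀ x ∈ Set.Icc (-1 : ℝ) 1,
      (x - a) ^ 3 * y x + (∫ s in (-1 : ℝ)..x, y s) = -f (-1) := by
  intro x hx
  obtain ⟨hx1, hx2⟩ := hx
  have hxa : x < a := lt_of_le_of_lt hx2 ha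
  have hne : ∀ s ∈ Set.uIcc (-1 : ℝ) x, s ≠ a := by
    intro s hs
    have h : s ∈ Set.uIcc (-1 : ℝ) 1 :=
      Set.uIcc_subset_uIcc Set.left_mem_uIcc (Set.mem_uIcc.mpr (Or.inl ⟨hx1, hx2⟩)) hs
    rw [Set.uIcc_of_le (by linarith : (-1:ℝ) ≤ 1)] at h
    intro hc
    rw [hc] at h
    linarith [h.2]
  have hderiv : ∀ s ∈ Set.uIcc (-1 : ℝ) x, HasDerivAt f (y s) s := by
    intro s hs
    rw [hf, hy]
    simpa [hf] using stmt13_deriv a s (hne s hs)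
  have hcont : ContinuousOn y (Set.uIcc (-1 : ℝ) x) := by
    rw [hy, hf]
    apply ContinuousOn.mul
    · apply ContinuousOn.zpow₀ (by fun_prop)
      intro s hs
      left
      exact sub_ne_zero.mpr fun h => hne s hs h.symm
    · apply Real.continuous_exp.comp_continuousOn
      apply ContinuousOn.div continuousOn_const
      · fun_prop
      · intro s hs
        have := sub_ne_zero.mpr (hne s hs)
        positivity
  have hint : IntervalIntegrable y MeasureTheory.volume (-1) x :=
    hcont.intervalIntegrable
  have hFTC := intervalIntegral.integral_eq_sub_of_hasDerivAt hderiv hint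
  rw [hFTC, hy]
  have hy0 : (a - x) ≠ 0 := sub_ne_zero.mpr hxa.ne'
  have h : (a - x) ^ (3:ℕ) ≠ 0 := pow_ne_zero 3 hy0
  have key : (x - a) ^ 3 * ((a - x) ^ (-3 : ℤ) * f x) = -f x := by
    rw [zpow_neg, show ((a - x) ^ (3:ℤ)) = (a - x) ^ (3:ℕ) from zpow_natCast _ 3,
      show (x - a) ^ 3 = -(a - x) ^ (3:ℕ) by ring, neg_mul, ← mul_assoc,
      mul_inv_cancel₀ h, one_mul]
  rw [key]
  ring
end

section
/- Let ν be an orthogonal polynomial basis with three-term recurrence coefficients αⱼ, βⱼ, γⱼ, all αⱼ ≠ 0, η the differentiation coefficients and θ the integration coefficients as above. Then the θ's are uniquely determined by the triangular back-substitution: θ_{j+1,j} = αⱼ/(j+1) and θ_{i+1,j} = −(αᵢ/(i+1)) Σ_{k=i+2}^{j+1} η_{i,k} θ_{k,j} for i = j−1, j−2, …, 0. -/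
open Polynomial MeasureTheory

/-- Linear independence of polynomials with strictly increasing degrees,
in the explicit form we need. -/
lemma aux_indep (ν : ℕ → Polynomial ℝ) (hν0 : ν 0 = 1)
    (hdeg : ∀ j, (ν j).natDegree = j) :
    ∀ N (c : ℕ → ℝ),
      (∑ m ∈ Finset.range N, Polynomial.C (c m) * ν m) = 0 → ∀ m < N, c m = 0 := by
  intro N
  induction N with
  | zero => intro c _ m hm; omega
  | succ N ih =>
    intro c hc m hm
    have hνN : ν N ≠ 0 := by
      rcases Nat.eq_zero_or_pos N with h0 | hpos
      · subst h0; rw [hν0]; exact one_ne_zero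
      · intro h
        have := hdeg N
        rw [h, Polynomial.natDegree_zero] at this
        omega
    have hlead : (ν N).coeff N ≠ 0 := by
      have := Polynomial.leadingCoeff_ne_zero.mpr hνN
      rwa [Polynomial.leadingCoeff, hdeg N] at this
    -- coefficient of X^N
    have hcN : c N = 0 := by
      have h1 : (∑ m ∈ Finset.range (N + 1), Polynomial.C (c m) * ν m).coeff N = 0 := by
        rw [hc]; simp
      rw [Polynomial.finset_sum_coeff, Finset.sum_range_succ] at h1
      have h2 : ∀ m ∈ Finset.range N, (Polynomial.C (c m) * ν m).coeff N = 0 := by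
        intro m hm
        rw [Polynomial.coeff_C_mul]
        have : (ν m).coeff N = 0 := by
          apply Polynomial.coeff_eq_zero_of_natDegree_lt
          rw [hdeg m]; exact Finset.mem_range.mp hm
        rw [this, mul_zero]
      rw [Finset.sum_eq_zero h2, zero_add, Polynomial.coeff_C_mul] at h1
      exact (mul_eq_zero.mp h1).resolve_right hlead
    rcases Nat.lt_succ_iff_lt_or_eq.mp hm with hm' | hm'
    · apply ih c _ m hm'
      rw [Finset.sum_range_succ, hcN, map_zero, zero_mul, add_zero] at hc
      exact hc
    · rw [hm']; exact hcN

/-- the integration coefficients θ are determined by triangular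
back-substitution: `θ_{j+1,j} = αⱼ/(j+1)` and
`θ_{i+1,j} = -(αᵢ/(i+1)) Σ_{k=i+2}^{j+1} η_{i,k} θ_{k,j}` for `i = j-1, …, 0`. -/
theorem stmt17
    (a b : ℝ) (w : ℝ → ℝ) (ν : ℕ → Polynomial ℝ) (α β γ : ℕ → ℝ)
    (hw : ∀ x ∈ Set.Icc a b, 0 < w x)
    (hν0 : ν 0 = 1)
    (hdeg : ∀ j, (ν j).natDegree = j)
    (horth : ∀ i j, i ≠ j → ∫ x in a..b, (ν i).eval x * (ν j).eval x * w x = 0)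
    (hnorm : ∀ i, 0 < ∫ x in a..b, (ν i).eval x * (ν i).eval x * w x)
    (hα : ∀ j, α j ≠ 0)
    (hrec : ∀ j : ℕ, Polynomial.X * ν j =
      Polynomial.C (α j) * ν (j + 1) + Polynomial.C (β j) * ν j +
        Polynomial.C (γ j) * (if j = 0 then 0 else ν (j - 1)))
    (η : ℕ → ℕ → ℝ)
    (hη : ∀ j : ℕ, Polynomial.derivative (ν j) =
      ∑ i ∈ Finset.range j, Polynomial.C (η i j) * ν i)
    (hη1 : ∀ i : ℕ, η i (i + 1) = ((i : ℝ) + 1) / α i)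
    (θ : ℕ → ℕ → ℝ)
    (hθ : ∀ j : ℕ, Polynomial.derivative
      (∑ i ∈ Finset.Icc 1 (j + 1), Polynomial.C (θ i j) * ν i) = ν j) :
    ∀ j : ℕ,
      θ (j + 1) j = α j / ((j : ℝ) + 1) ∧
      ∀ i : ℕ, i < j →
        θ (i + 1) j =
          -(α i / ((i : ℝ) + 1)) * ∑ k ∈ Finset.Icc (i + 2) (j + 1), η i k * θ k j := by
  intro j
  -- Expand the derivative condition
  have h1 : ∑ i ∈ Finset.Icc 1 (j + 1), ∑ m ∈ Finset.range i,
      Polynomial.C (θ i j * η m i) * ν m = ν j := by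
    rw [← hθ j, map_sum]
    apply Finset.sum_congr rfl
    intro i _
    rw [Polynomial.derivative_C_mul, hη i, Finset.mul_sum]
    apply Finset.sum_congr rfl
    intro m _
    rw [← mul_assoc, ← Polynomial.C_mul]
  -- Swap the order of summation
  have h2 : ∑ m ∈ Finset.range (j + 1), ∑ i ∈ Finset.Icc (m + 1) (j + 1),
      Polynomial.C (θ i j * η m i) * ν m = ν j := by
    rw [← h1]
    exact (Finset.sum_comm' (by
      intro i m
      simp only [Finset.mem_Icc, Finset.mem_range]
      omega)).symm
  -- Factor out ν m
  have h3 : ∑ m ∈ Finset.range (j + 1),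
      Polynomial.C ((∑ i ∈ Finset.Icc (m + 1) (j + 1), θ i j * η m i)
        - (if m = j then (1:ℝ) else 0)) * ν m = 0 := by
    have hRHS : ν j = ∑ m ∈ Finset.range (j + 1),
        Polynomial.C (if m = j then (1:ℝ) else 0) * ν m := by
      rw [Finset.sum_congr rfl (fun m _ => by
        rw [apply_ite Polynomial.C, Polynomial.C_1, Polynomial.C_0, ite_mul, one_mul, zero_mul])]
      rw [Finset.sum_ite_eq' (Finset.range (j+1)) j (fun m => ν m)]
      simp
    calc ∑ m ∈ Finset.range (j + 1),
        Polynomial.C ((∑ i ∈ Finset.Icc (m + 1) (j + 1), θ i j * η m i)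
          - (if m = j then (1:ℝ) else 0)) * ν m
        = (∑ m ∈ Finset.range (j + 1), ∑ i ∈ Finset.Icc (m + 1) (j + 1),
            Polynomial.C (θ i j * η m i) * ν m)
          - ∑ m ∈ Finset.range (j + 1),
            Polynomial.C (if m = j then (1:ℝ) else 0) * ν m := by
          rw [← Finset.sum_sub_distrib]
          apply Finset.sum_congr rfl
          intro m _
          rw [map_sub, sub_mul, map_sum, Finset.sum_mul]
      _ = 0 := by rw [h2, ← hRHS, sub_self]
  -- Extract that each coefficient vanishes
  have key : ∀ m < j + 1,
      (∑ i ∈ Finset.Icc (m + 1) (j + 1), θ i j * η m i)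
        = (if m = j then (1:ℝ) else 0) := by
    intro m hm
    have := aux_indep ν hν0 hdeg (j + 1) _ h3 m hm
    linarith [this]
  constructor
  · -- θ (j+1) j = α j / (j+1)
    have hkj := key j (by omega)
    rw [if_pos rfl] at hkj
    rw [Finset.Icc_self, Finset.sum_singleton, hη1 j] at hkj
    have hj1 : ((j : ℝ) + 1) ≠ 0 := by positivity
    field_simp at hkj
    rw [div_eq_one_iff_eq (hα j)] at hkj
    rw [eq_div_iff hj1]
    linarith [hkj]
  · intro i hij
    have hki := key i (by omega)
    rw [if_neg (by omega)] at hki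
    have hsplit : Finset.Icc (i + 1) (j + 1) = insert (i + 1) (Finset.Icc (i + 2) (j + 1)) := by
      ext x
      simp only [Finset.mem_Icc, Finset.mem_insert]
      omega
    rw [hsplit, Finset.sum_insert (by simp), hη1 i] at hki
    have hi1 : ((i : ℝ) + 1) ≠ 0 := by positivity
    have hαi := hα i
    have hsum : ∑ k ∈ Finset.Icc (i + 2) (j + 1), η i k * θ k j
        = ∑ k ∈ Finset.Icc (i + 2) (j + 1), θ k j * η i k := by
      apply Finset.sum_congr rfl; intro k _; ring
    rw [hsum]
    field_simp at hki ⊢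
    linarith [hki]
end
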